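/- arXiv:2406.12152 — 7 statements merged into one kernel-verified Lean document; each statement's English description precedes it below -/
import Mathlib

section
/- For every positive integer n and every real α with 0 ≤ α ≤ 1, the following two-sided bound holds: α + α(1-α)/(4n) ≤ (n + 1/2)·ln((n+α)/n) ≤ α + α(1-α)/(4n) + 1/(16n). -/
/-!
With `u = α / (2n + α)` we have `(n + α) / n = (1 + u) / (1 - u)`, so
`log ((n + α) / n) = 2 ∑ u ^ (2k + 1) / (2k + 1)`. The first term alone gives
`(n + 1/2) · 2u = α + α (1 - α) / (2n + α)`, which is already the lower bound. Bounding the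
tail by the geometric series `(2/3) u³ / (1 - u²)` reduces the upper bound to
`6 (1 - 2α)² n² + α (3 - 2α)² n + α² (3 + 8α - 12α²) ≥ 0`, which holds for `n ≥ 1`.
-/

open Real

lemma two_mul_le_log_one_add_sub_log_one_sub {u : ℝ} (h0 : 0 ≤ u) (h1 : u < 1) :
    2 * u ≤ log (1 + u) - log (1 - u) := by
  have hs := hasSum_log_sub_log_of_abs_lt_one (abs_lt.2 ⟨by linarith, h1⟩)
  simpa using le_hasSum hs 0 fun k _ => by positivity

lemma log_one_add_sub_log_one_sub_le {u : ℝ} (h0 : 0 ≤ u) (h1 : u < 1) :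
    log (1 + u) - log (1 - u) ≤ 2 * u + 2 / 3 * u ^ 3 * (1 - u ^ 2)⁻¹ := by
  have hs := (hasSum_nat_add_iff' 1).2 <|
    hasSum_log_sub_log_of_abs_lt_one (abs_lt.2 ⟨by linarith, h1⟩)
  have hgeom := (hasSum_geometric_of_lt_one (sq_nonneg u) (by nlinarith)).mul_left (2 / 3 * u ^ 3)
  have htail := hasSum_le (fun k => ?_) hs hgeom
  · simp only [Finset.sum_range_one, Nat.cast_zero] at htail
    linarith
  · have hk : (1 : ℝ) / (2 * ((k + 1 : ℕ) : ℝ) + 1) ≤ 1 / 3 := by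
      gcongr; push_cast; linarith [k.cast_nonneg (α := ℝ)]
    calc 2 * (1 / (2 * ((k + 1 : ℕ) : ℝ) + 1)) * u ^ (2 * (k + 1) + 1)
        ≤ 2 * (1 / 3) * u ^ (2 * (k + 1) + 1) := by gcongr
      _ = 2 / 3 * u ^ 3 * (u ^ 2) ^ k := by ring

lemma log_add_div_eq_log_one_add_sub_log_one_sub {N α : ℝ} (hN : 0 < N) (hα : 0 ≤ α) :
    log ((N + α) / N) = log (1 + α / (2 * N + α)) - log (1 - α / (2 * N + α)) := by
  have h : 0 < 2 * N + α := by linarith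
  rw [← log_div (by positivity) (ne_of_gt (by rw [sub_pos, div_lt_one h]; linarith))]
  congr 1
  field_simp
  ring

lemma le_mul_log_add_div {N α : ℝ} (hN : 1 / 2 ≤ N) (h0 : 0 ≤ α) (h1 : α ≤ 1) :
    α + α * (1 - α) / (4 * N) ≤ (N + 1 / 2) * log ((N + α) / N) := by
  have h : 0 < 2 * N + α := by linarith
  have hu : α / (2 * N + α) < 1 := by rw [div_lt_one h]; linarith
  calc α + α * (1 - α) / (4 * N)
      ≤ α + α * (1 - α) / (2 * N + α) := by
        gcongr
        linarith
    _ = (N + 1 / 2) * (2 * (α / (2 * N + α))) := by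
        linear_combination -α * mul_inv_cancel₀ h.ne'
    _ ≤ (N + 1 / 2) * log ((N + α) / N) := by
        rw [log_add_div_eq_log_one_add_sub_log_one_sub (by linarith) h0]
        gcongr
        exact two_mul_le_log_one_add_sub_log_one_sub (by positivity) hu

lemma mul_log_add_div_le {N α : ℝ} (hN : 1 ≤ N) (h0 : 0 ≤ α) (h1 : α ≤ 1) :
    (N + 1 / 2) * log ((N + α) / N) ≤ α + α * (1 - α) / (4 * N) + 1 / (16 * N) := by
  have h : 0 < 2 * N + α := by linarith
  set u := α / (2 * N + α) with hu_def
  have hu : u < 1 := by rw [div_lt_one h]; linarith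
  have hu_sq : 1 - u ^ 2 = 4 * N * (N + α) / (2 * N + α) ^ 2 := by
    rw [hu_def]; field_simp; ring
  have hpoly : α + α * (1 - α) / (4 * N) + 1 / (16 * N)
        - (N + 1 / 2) * (2 * u + 2 / 3 * u ^ 3 * (1 - u ^ 2)⁻¹)
      = (6 * (1 - 2 * α) ^ 2 * N ^ 2 + α * (3 - 2 * α) ^ 2 * N
          + α ^ 2 * (3 + 8 * α - 12 * α ^ 2)) / (48 * N * (N + α) * (2 * N + α)) := by
    rw [hu_sq, hu_def]
    field_simp
    ring
  have hnum : 0 ≤ 6 * (1 - 2 * α) ^ 2 * N ^ 2 + α * (3 - 2 * α) ^ 2 * N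
      + α ^ 2 * (3 + 8 * α - 12 * α ^ 2) := by
    nlinarith [mul_nonneg (mul_nonneg h0 (sq_nonneg (3 - 2 * α))) (sub_nonneg.2 hN),
      mul_nonneg h0 (sub_nonneg.2 h1), mul_nonneg (pow_nonneg h0 3) (sub_nonneg.2 h1)]
  calc (N + 1 / 2) * log ((N + α) / N)
      ≤ (N + 1 / 2) * (2 * u + 2 / 3 * u ^ 3 * (1 - u ^ 2)⁻¹) := by
        rw [log_add_div_eq_log_one_add_sub_log_one_sub (by linarith) h0]
        gcongr
        exact log_one_add_sub_log_one_sub_le (by positivity) hu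
    _ ≤ α + α * (1 - α) / (4 * N) + 1 / (16 * N) := by
        rw [← sub_nonneg, hpoly]
        have : 0 < N + α := by linarith
        positivity

theorem log_two_sided_bound (n : ℕ) (hn : 0 < n) (α : ℝ) (hα0 : 0 ≤ α) (hα1 : α ≤ 1) :
    α + α * (1 - α) / (4 * n) ≤ ((n : ℝ) + 1 / 2) * Real.log (((n : ℝ) + α) / n) ∧
    ((n : ℝ) + 1 / 2) * Real.log (((n : ℝ) + α) / n) ≤
      α + α * (1 - α) / (4 * n) + 1 / (16 * n) := by
  have hN : (1 : ℝ) ≤ n := by exact_mod_cast hn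
  exact ⟨le_mul_log_add_div (by linarith) hα0 hα1, mul_log_add_div_le hN hα0 hα1⟩
end

section
/- For every positive integer n and every real α with 0 ≤ α ≤ 1, e^{-α - α(1-α)/(4n) - 1/(16n)} ≤ (n/(n+α))^{n+1/2} ≤ e^{-α - α(1-α)/(4n)}. -/
/-!
Write the power as `exp (-(n + 1/2) log (1 + α/n))` and squeeze `log (1 + x)` between the
rational bounds `2x/(x + 2)` and `x(x + 6)/(4x + 6)`; the latter follows from
`x(x + 6)/(4x + 6) - log (1 + x)` vanishing at `0` with derivative `4x³/((4x + 6)²(1 + x)) ≥ 0`.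
What remains are rational inequalities in `n` and `α`, which hold for `n ≥ 1` and `0 ≤ α ≤ 1`.
-/

open Real Set

namespace Real

lemma log_one_add_le_of_nonneg {x : ℝ} (hx : 0 ≤ x) : log (1 + x) ≤ x * (x + 6) / (4 * x + 6) := by
  let f : ℝ → ℝ := fun t ↦ t * (t + 6) / (4 * t + 6) - log (1 + t)
  have hf : ∀ t, 0 ≤ t → HasDerivAt f (4 * t ^ 3 / ((4 * t + 6) ^ 2 * (1 + t))) t := by
    intro t ht
    refine ((((hasDerivAt_id t).mul ((hasDerivAt_id t).add_const 6)).div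
      (((hasDerivAt_id t).const_mul 4).add_const 6) (by positivity)).sub
      (((hasDerivAt_id t).const_add 1).log (by positivity))).congr_deriv ?_
    simp only [id, Pi.mul_apply]
    field_simp
    ring
  have hmono : MonotoneOn f (Ici 0) := by
    refine monotoneOn_of_hasDerivWithinAt_nonneg (convex_Ici 0)
      (f' := fun t ↦ 4 * t ^ 3 / ((4 * t + 6) ^ 2 * (1 + t)))
      (fun t ht ↦ (hf t ht).continuousAt.continuousWithinAt)
      (fun t ht ↦ (hf t (interior_subset ht)).hasDerivWithinAt)
      (fun t ht ↦ by have : 0 ≤ t := interior_subset ht; positivity)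
  simpa [f] using hmono self_mem_Ici hx hx

lemma div_rpow_eq_exp_neg_mul_log_one_add {a b : ℝ} (ha : 0 < a) (hb : 0 ≤ b) (s : ℝ) :
    (a / (a + b)) ^ s = exp (-(s * log (1 + b / a))) := by
  rw [rpow_def_of_pos (by positivity), mul_comm, ← mul_neg, ← log_inv]
  congr 3
  field_simp

end Real

lemma add_mul_one_sub_div_le_mul_log_one_add {n α : ℝ} (hn : 1 ≤ n) (hα0 : 0 ≤ α) (hα1 : α ≤ 1) :
    α + α * (1 - α) / (4 * n) ≤ (n + 1 / 2) * log (1 + α / n) := by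
  have hn0 : 0 < n := by linarith
  calc α + α * (1 - α) / (4 * n) ≤ (n + 1 / 2) * (2 * (α / n) / (α / n + 2)) := by
        rw [← sub_nonneg]
        have key : (n + 1 / 2) * (2 * (α / n) / (α / n + 2)) - (α + α * (1 - α) / (4 * n)) =
            α * (1 - α) * (2 * n - α) / (4 * n * (α + 2 * n)) := by
          field_simp
          ring
        rw [key]
        apply div_nonneg _ (by positivity)
        exact mul_nonneg (mul_nonneg hα0 (by linarith)) (by linarith)
    _ ≤ (n + 1 / 2) * log (1 + α / n) :=
        mul_le_mul_of_nonneg_left (le_log_one_add_of_nonneg (by positivity)) (by positivity)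

lemma mul_log_one_add_le_add_mul_one_sub_div {n α : ℝ} (hn : 1 ≤ n) (hα0 : 0 ≤ α) (hα1 : α ≤ 1) :
    (n + 1 / 2) * log (1 + α / n) ≤ α + α * (1 - α) / (4 * n) + 1 / (16 * n) := by
  have hn0 : 0 < n := by linarith
  calc (n + 1 / 2) * log (1 + α / n)
      ≤ (n + 1 / 2) * (α / n * (α / n + 6) / (4 * (α / n) + 6)) :=
        mul_le_mul_of_nonneg_left (log_one_add_le_of_nonneg (by positivity)) (by positivity)
    _ ≤ α + α * (1 - α) / (4 * n) + 1 / (16 * n) := by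
        rw [← sub_nonneg]
        have key : α + α * (1 - α) / (4 * n) + 1 / (16 * n) -
              (n + 1 / 2) * (α / n * (α / n + 6) / (4 * (α / n) + 6)) =
            (n * (3 - 12 * α + 12 * α ^ 2) + 2 * α * (1 + 2 * α - 4 * α ^ 2)) /
              (8 * n * (4 * α + 6 * n)) := by
          field_simp
          ring
        rw [key]
        apply div_nonneg _ (by positivity)
        nlinarith [mul_nonneg (sub_nonneg.2 hn) (sq_nonneg (2 * α - 1)),
          mul_nonneg (sub_nonneg.2 hα1) (sq_nonneg (2 * α - 1))]

theorem rpow_exp_two_sided_bound (n : ℕ) (hn : 0 < n) (α : ℝ) (hα0 : 0 ≤ α) (hα1 : α ≤ 1) :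
    Real.exp (-α - α * (1 - α) / (4 * n) - 1 / (16 * n)) ≤
      ((n : ℝ) / ((n : ℝ) + α)) ^ ((n : ℝ) + 1 / 2) ∧
    ((n : ℝ) / ((n : ℝ) + α)) ^ ((n : ℝ) + 1 / 2) ≤
      Real.exp (-α - α * (1 - α) / (4 * n)) := by
  have hn1 : (1 : ℝ) ≤ n := by exact_mod_cast hn
  rw [div_rpow_eq_exp_neg_mul_log_one_add (by positivity) hα0, exp_le_exp, exp_le_exp]
  constructor
  · linarith [mul_log_one_add_le_add_mul_one_sub_div hn1 hα0 hα1]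
  · linarith [add_mul_one_sub_div_le_mul_log_one_add hn1 hα0 hα1]
end

section
/- For every positive integer n and every real α with 0 ≤ α ≤ 1, (√(2π) · e^{1/(12n+1) - 1/(16n) - α(1-α)/(4n)}) / √(n+α) < (n! / (n+α)^{n+1}) · e^{n+α} < (√(2π) · e^{1/(12n) - α(1-α)/(4n)}) / √(n+α). -/
/-!
Write `n! = σₙ √(2n) (n/e)ⁿ`, where `σₙ = Stirling.stirlingSeq n`. Then the middle expression is
`√(2π) / √(n+α) · exp ((log σₙ - log √π) + (α - (n + 1/2) log (1 + α/n)))`, and the two summands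
of the exponent are bounded separately.

Robbins: `1/(12n+1) < log σₙ - log √π < 1/(12n)`. Both sides come from telescoping the series
`log σₙ - log σₙ₊₁ = ∑ₖ r^(k+1) / (2k+3)` with `r = (2n+1)⁻²` down to the limit `log √π`: its first
term bounds it from below, and the geometric series `∑ r^(k+1) / 3` from above.

The shift: the Padé bounds `2t/(t+2) ≤ log (1+t) ≤ t(t+6)/(4t+6)` at `t = α/n` give
`-α(1-α)/(4n) - 1/(16n) ≤ α - (n + 1/2) log (1 + α/n) ≤ -α(1-α)/(4n)`.
-/

open Real Filter Topology Stirling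
open scoped Nat

theorem lt_add_of_tendsto_of_sub_succ_lt {u g : ℕ → ℝ} {L : ℝ} (hu : Tendsto u atTop (𝓝 L))
    (hg : Tendsto g atTop (𝓝 0)) (h : ∀ k, u k - u (k + 1) < g k - g (k + 1)) (n : ℕ) :
    u n < L + g n := by
  have hmono : StrictMono fun k ↦ u k - g k :=
    strictMono_nat_of_lt_succ fun k ↦ by linarith [h k]
  have hlim : Tendsto (fun k ↦ u k - g k) atTop (𝓝 L) := by simpa using hu.sub hg
  linarith [hmono.monotone.ge_of_tendsto hlim (n + 1), hmono n.lt_succ_self]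

theorem add_lt_of_tendsto_of_sub_succ_lt {u g : ℕ → ℝ} {L : ℝ} (hu : Tendsto u atTop (𝓝 L))
    (hg : Tendsto g atTop (𝓝 0)) (h : ∀ k, g k - g (k + 1) < u k - u (k + 1)) (n : ℕ) :
    L + g n < u n := by
  have := lt_add_of_tendsto_of_sub_succ_lt hu.neg (by simpa using hg.neg)
    (fun k ↦ by linarith [h k]) n
  linarith

theorem tendsto_one_div_mul_succ_add {a : ℝ} (ha : 0 < a) (c : ℝ) :
    Tendsto (fun k : ℕ ↦ 1 / (a * ((k : ℝ) + 1) + c)) atTop (𝓝 0) := by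
  refine tendsto_const_nhds.div_atTop (tendsto_atTop_add_const_right _ c ?_)
  exact (tendsto_natCast_atTop_atTop.atTop_add tendsto_const_nhds).const_mul_atTop ha

theorem log_one_add_le_pade {t : ℝ} (ht : 0 ≤ t) : log (1 + t) ≤ t * (t + 6) / (4 * t + 6) := by
  set f : ℝ → ℝ := fun x ↦ x * (x + 6) / (4 * x + 6) - log (1 + x)
  have hf (x : ℝ) (hx : 0 ≤ x) : HasDerivAt f (4 * x ^ 3 / ((4 * x + 6) ^ 2 * (1 + x))) x := by
    have hpade := ((hasDerivAt_id' x).mul ((hasDerivAt_id' x).add_const 6)).div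
      (((hasDerivAt_id' x).const_mul 4).add_const 6) (by positivity)
    have hlog := ((hasDerivAt_id' x).const_add 1).log (by positivity)
    refine (hpade.sub hlog).congr_deriv ?_
    simp only [Pi.mul_apply]
    field_simp
    ring
  have hmono : MonotoneOn f (Set.Ici 0) :=
    monotoneOn_of_hasDerivWithinAt_nonneg (convex_Ici 0)
      (fun x hx ↦ (hf x hx).continuousAt.continuousWithinAt)
      (fun x hx ↦ (hf x (interior_subset hx)).hasDerivWithinAt)
      fun x hx ↦ by rw [interior_Ici] at hx; have : 0 < x := hx; positivity
  simpa [f] using hmono Set.self_mem_Ici ht ht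

theorem le_mul_log_one_add_div {m α : ℝ} (hm : 0 < m) (hα0 : 0 ≤ α) (hα1 : α ≤ 1)
    (hαm : α ≤ 2 * m) : α + α * (1 - α) / (4 * m) ≤ (m + 1 / 2) * log (1 + α / m) := by
  have hgap : (m + 1 / 2) * (2 * (α / m) / (α / m + 2)) - (α + α * (1 - α) / (4 * m)) =
      α * (1 - α) * (2 * m - α) / (4 * m * (α + 2 * m)) := by
    field_simp
    ring
  calc α + α * (1 - α) / (4 * m) ≤ (m + 1 / 2) * (2 * (α / m) / (α / m + 2)) := by
        rw [← sub_nonneg, hgap]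
        have : 0 ≤ 1 - α := by linarith
        have : 0 ≤ 2 * m - α := by linarith
        positivity
    _ ≤ (m + 1 / 2) * log (1 + α / m) := by
        gcongr
        exact le_log_one_add_of_nonneg (by positivity)

theorem mul_log_one_add_div_le {m α : ℝ} (hm : 1 ≤ m) (hα0 : 0 ≤ α) (hα1 : α ≤ 1) :
    (m + 1 / 2) * log (1 + α / m) ≤ α + α * (1 - α) / (4 * m) + 1 / (16 * m) := by
  have hm0 : 0 < m := by linarith
  have hgap : α + α * (1 - α) / (4 * m) + 1 / (16 * m) -
      (m + 1 / 2) * (α / m * (α / m + 6) / (4 * (α / m) + 6)) =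
      (3 * (m - 1) * (2 * α - 1) ^ 2 + 2 * (1 - α) * (2 * α - 1) ^ 2 + 1) /
        (16 * m * (2 * α + 3 * m)) := by
    field_simp
    ring
  calc (m + 1 / 2) * log (1 + α / m)
      ≤ (m + 1 / 2) * (α / m * (α / m + 6) / (4 * (α / m) + 6)) := by
        gcongr
        exact log_one_add_le_pade (by positivity)
    _ ≤ α + α * (1 - α) / (4 * m) + 1 / (16 * m) := by
        rw [← sub_nonneg, hgap]
        have : 0 ≤ m - 1 := by linarith
        have : 0 ≤ 1 - α := by linarith
        positivity

theorem log_stirlingSeq_succ_sub_lt (n : ℕ) :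
    log (stirlingSeq (n + 1)) - log (stirlingSeq (n + 2)) <
      1 / (12 * ((n : ℝ) + 1)) - 1 / (12 * ((n : ℝ) + 2)) := by
  have hn := n.cast_nonneg (α := ℝ)
  set r : ℝ := (1 / (2 * ↑(n + 1) + 1)) ^ 2 with hr
  have hr0 : 0 < r := by positivity
  have hr1 : r < 1 := by
    rw [hr, div_pow, one_pow, div_lt_one (by positivity)]
    push_cast
    nlinarith
  have hgeom : HasSum (fun j : ℕ ↦ r ^ (j + 1) / 3) (r / (1 - r) / 3) := by
    simpa [pow_succ, div_eq_mul_inv, mul_comm, mul_left_comm, mul_assoc] using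
      ((hasSum_geometric_of_lt_one hr0.le hr1).mul_right r).div_const 3
  have hterm (j : ℕ) : (1 : ℝ) / (2 * ↑(j + 1) + 1) * r ^ (j + 1) ≤ r ^ (j + 1) / 3 := by
    rw [div_mul_eq_mul_div, one_mul]
    gcongr
    push_cast
    linarith [j.cast_nonneg (α := ℝ)]
  have hterm_one : (1 : ℝ) / (2 * ↑((1 : ℕ) + 1) + 1) * r ^ (1 + 1) < r ^ (1 + 1) / 3 := by
    norm_num
    linarith [pow_pos hr0 2]
  refine (hasSum_lt hterm hterm_one (log_stirlingSeq_sdiff_hasSum n) hgeom).trans_eq ?_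
  have hD : (2 * ((n : ℝ) + 1) + 1) ^ 2 - 1 ≠ 0 := by nlinarith
  rw [hr]
  push_cast
  field_simp
  ring

theorem sub_lt_log_stirlingSeq_succ_sub (n : ℕ) :
    1 / (12 * ((n : ℝ) + 1) + 1) - 1 / (12 * ((n : ℝ) + 2) + 1) <
      log (stirlingSeq (n + 1)) - log (stirlingSeq (n + 2)) := by
  have hn := n.cast_nonneg (α := ℝ)
  refine lt_of_lt_of_le ?_ (le_hasSum (log_stirlingSeq_sdiff_hasSum n) 0 fun _ _ ↦ by positivity)
  push_cast
  rw [div_sub_div _ _ (by positivity) (by positivity), div_lt_iff₀ (by positivity)]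
  field_simp
  nlinarith

theorem tendsto_log_stirlingSeq_succ :
    Tendsto (fun k : ℕ ↦ log (stirlingSeq (k + 1))) atTop (𝓝 (log √π)) :=
  (tendsto_stirlingSeq_sqrt_pi.comp (tendsto_add_atTop_nat 1)).log (by positivity)

theorem log_stirlingSeq_lt {n : ℕ} (hn : n ≠ 0) :
    log (stirlingSeq n) < log √π + 1 / (12 * n) := by
  obtain ⟨m, rfl⟩ := Nat.exists_eq_succ_of_ne_zero hn
  have := lt_add_of_tendsto_of_sub_succ_lt tendsto_log_stirlingSeq_succ
    (by simpa using tendsto_one_div_mul_succ_add (by norm_num : (0 : ℝ) < 12) 0)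
    (fun k ↦ (log_stirlingSeq_succ_sub_lt k).trans_eq (by push_cast; field_simp; ring)) m
  simpa using this

theorem lt_log_stirlingSeq {n : ℕ} (hn : n ≠ 0) :
    log √π + 1 / (12 * n + 1) < log (stirlingSeq n) := by
  obtain ⟨m, rfl⟩ := Nat.exists_eq_succ_of_ne_zero hn
  have := add_lt_of_tendsto_of_sub_succ_lt tendsto_log_stirlingSeq_succ
    (tendsto_one_div_mul_succ_add (by norm_num : (0 : ℝ) < 12) 1)
    (fun k ↦ (sub_lt_log_stirlingSeq_succ_sub k).trans_eq' (by push_cast; field_simp; ring)) m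
  simpa using this

theorem factorial_div_pow_mul_exp_eq {n : ℕ} (hn : n ≠ 0) {α : ℝ} (hα : 0 < n + α) :
    n ! / ((n : ℝ) + α) ^ (n + 1) * exp (n + α) =
      √(2 * π) * exp ((log (stirlingSeq n) - log √π) + (α - (n + 1 / 2) * log (1 + α / n))) /
        √(n + α) := by
  have hn0 : (0 : ℝ) < n := by positivity
  refine log_injOn_pos (Set.mem_Ioi.2 (by positivity)) (Set.mem_Ioi.2 (by positivity)) ?_
  have hshift : 1 + α / n = (n + α) / n := by field_simp
  rw [log_mul (by positivity) (exp_pos _).ne', log_div (by positivity) (by positivity), log_pow,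
    log_exp, log_div (by positivity) (by positivity), log_mul (by positivity) (exp_pos _).ne',
    log_exp, log_sqrt (by positivity : (0 : ℝ) ≤ 2 * π), log_sqrt hα.le, log_sqrt pi_pos.le,
    log_mul two_ne_zero pi_pos.ne', log_stirlingSeq_formula, log_mul two_ne_zero hn0.ne',
    log_div hn0.ne' (exp_pos _).ne', log_exp, hshift, log_div hα.ne' hn0.ne']
  push_cast
  ring

theorem factorial_expression_two_sided_bound (n : ℕ) (hn : 0 < n) (α : ℝ)
    (hα0 : 0 ≤ α) (hα1 : α ≤ 1) :
    Real.sqrt (2 * Real.pi) *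
        Real.exp (1 / (12 * n + 1) - 1 / (16 * n) - α * (1 - α) / (4 * n)) /
        Real.sqrt ((n : ℝ) + α)
      < (Nat.factorial n : ℝ) / ((n : ℝ) + α) ^ (n + 1) * Real.exp ((n : ℝ) + α) ∧
    (Nat.factorial n : ℝ) / ((n : ℝ) + α) ^ (n + 1) * Real.exp ((n : ℝ) + α)
      < Real.sqrt (2 * Real.pi) *
          Real.exp (1 / (12 * n) - α * (1 - α) / (4 * n)) /
          Real.sqrt ((n : ℝ) + α) := by
  have hn0 : n ≠ 0 := hn.ne'
  have hm : (1 : ℝ) ≤ n := by exact_mod_cast hn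
  have hstirling_lo := lt_log_stirlingSeq hn0
  have hstirling_hi := log_stirlingSeq_lt hn0
  have hshift_lo := le_mul_log_one_add_div (m := n) (by positivity) hα0 hα1 (by linarith)
  have hshift_hi := mul_log_one_add_div_le hm hα0 hα1
  rw [factorial_div_pow_mul_exp_eq hn0 (by positivity)]
  constructor <;> gcongr <;> linarith
end

section
/- For every integer k ≥ 1, √(2π)·e^{1/(12k+1) - 1/(8k)} / (6(k+1)^{3/2}) ≤ Δ_{k+1} ≤ √(2π)·e^{1/(12k)} / (6k^{3/2}), where Δ_{k+1} = ∫_0^1 u(1-u)·e^{k+u}·k! / (k+u)^{k+2} du. -/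
open Real Finset Filter Stirling Topology

set_option maxHeartbeats 1000000

lemma logA {x : ℝ} (h0 : 0 ≤ x) (h1 : x ≤ 1) : 2*x/(2+x) ≤ Real.log (1+x) := by
  have h2 : (0:ℝ) < 2 + x := by linarith
  set c := 2*x/(2+x) with hc
  have hc0 : 0 ≤ c := by positivity
  have hc1 : c ≤ 1 := by rw [div_le_one h2]; linarith
  rw [Real.le_log_iff_exp_le (by linarith)]
  have hb := Real.exp_bound' hc0 hc1 (n := 3) (by norm_num)
  norm_num [Finset.sum_range_succ, Nat.factorial] at hb
  have key : (1+x) - (1 + c + c^2/2 + (2/9)*c^3)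
      = x^3*(2+9*x)/(9*(2+x)^3) := by
    rw [hc]; field_simp; ring
  nlinarith [key, div_nonneg (mul_nonneg (pow_nonneg h0 3) (by linarith : (0:ℝ) ≤ 2+9*x)) (by positivity : (0:ℝ) ≤ 9*(2+x)^3)]

lemma logB {x : ℝ} (h0 : 0 ≤ x) : Real.log (1+x) ≤ x*(x+6)/(4*x+6) := by
  have h2 : (0:ℝ) < 4*x + 6 := by linarith
  set c := x*(x+6)/(4*x+6) with hc
  have hc0 : 0 ≤ c := by positivity
  rw [Real.log_le_iff_le_exp (by linarith)]
  have hb := Real.sum_le_exp_of_nonneg hc0 5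
  norm_num [Finset.sum_range_succ, Nat.factorial] at hb
  have key : (1 + c + c^2/2 + c^3/6 + c^4/24) - (1+x)
      = x^4*(864 + 1296*x + 720*x^2 + 40*x^3 + x^4)/(24*(4*x+6)^4) := by
    rw [hc]; field_simp; ring
  nlinarith [key, hb, div_nonneg (mul_nonneg (pow_nonneg h0 4) (by positivity : (0:ℝ) ≤ 864 + 1296*x + 720*x^2 + 40*x^3 + x^4)) (by positivity : (0:ℝ) ≤ 24*(4*x+6)^4)]

lemma step_lower (m : ℕ) : 1/(12*(m:ℝ)+13) - 1/(12*(m:ℝ)+25)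
    ≤ Real.log (stirlingSeq (m+1)) - Real.log (stirlingSeq (m+2)) := by
  have hs := Stirling.log_stirlingSeq_diff_hasSum m
  have h0 := le_hasSum hs 0 (fun i _ => by positivity)
  have hM : 0 ≤ (m:ℝ) := Nat.cast_nonneg m
  have key : (1/3) * (1/(2*(m:ℝ)+3))^2 - (1/(12*(m:ℝ)+13) - 1/(12*(m:ℝ)+25))
      = (24*(m:ℝ)+1)/(3*(2*(m:ℝ)+3)^2*((12*(m:ℝ)+13)*(12*(m:ℝ)+25))) := by
    field_simp
    ring
  have hpos : (0:ℝ) ≤ (24*(m:ℝ)+1)/(3*(2*(m:ℝ)+3)^2*((12*(m:ℝ)+13)*(12*(m:ℝ)+25))) := by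
    positivity
  push_cast at h0
  have e2 : (1:ℝ)/(2*1+1) * ((1/(2*((m:ℝ)+1)+1))^2)^1 = (1/3)*(1/(2*(m:ℝ)+3))^2 := by
    ring
  linarith [key, hpos, h0, e2]

lemma step_upper (m : ℕ) : Real.log (stirlingSeq (m+1)) - Real.log (stirlingSeq (m+2))
    ≤ 1/(12*(m:ℝ)+12) - 1/(12*(m:ℝ)+24) := by
  have hs := Stirling.log_stirlingSeq_diff_hasSum m
  have hM : 0 ≤ (m:ℝ) := Nat.cast_nonneg m
  have h_nonneg : (0 : ℝ) ≤ ((1 : ℝ) / (2 * ↑(m + 1) + 1)) ^ 2 := sq_nonneg _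
  have g : HasSum (fun k : ℕ => (((1 : ℝ) / (2 * ↑(m + 1) + 1)) ^ 2) ^ (k + 1))
      (((1 : ℝ) / (2 * ↑(m + 1) + 1)) ^ 2 / (1 - ((1 : ℝ) / (2 * ↑(m + 1) + 1)) ^ 2)) := by
    have := (hasSum_geometric_of_lt_one h_nonneg ?_).mul_left (((1 : ℝ) / (2 * ↑(m + 1) + 1)) ^ 2)
    · simp_rw [← _root_.pow_succ'] at this
      exact this
    rw [one_div, inv_pow]
    exact inv_lt_one_of_one_lt₀ (one_lt_pow₀ (lt_add_of_pos_left _ <| by positivity) two_ne_zero)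
  have g3 := g.mul_left (1/3 : ℝ)
  have hle : ∀ k : ℕ, (1:ℝ) / (2 * ↑(k + 1) + 1) * ((1 / (2 * ↑(m + 1) + 1):ℝ) ^ 2) ^ (k+1)
      ≤ (1/3 : ℝ) * (((1 : ℝ) / (2 * ↑(m + 1) + 1)) ^ 2) ^ (k+1) := by
    intro k
    have h1 : ((1:ℝ) / (2 * ↑(k + 1) + 1)) ≤ 1/3 := by
      rw [div_le_div_iff₀ (by positivity) (by norm_num)]
      push_cast; linarith [Nat.cast_nonneg (α := ℝ) k]
    exact mul_le_mul_of_nonneg_right h1 (by positivity)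
  have hfin := hasSum_le hle hs g3
  refine hfin.trans ?_
  have hne : ((2*(m:ℝ)+3):ℝ) ≠ 0 := by positivity
  have hlt : ((1:ℝ) / (2 * ((m:ℝ) + 1) + 1)) ^ 2 < 1 := by
    rw [div_pow, div_lt_one (by positivity)]; nlinarith
  have hne2 : (1:ℝ) - ((1:ℝ) / (2 * ((m:ℝ) + 1) + 1)) ^ 2 ≠ 0 := by
    intro h; nlinarith [hlt]
  have key : (1/3 : ℝ) * (((1 : ℝ) / (2 * ((m:ℝ) + 1) + 1)) ^ 2 /
        (1 - ((1 : ℝ) / (2 * ((m:ℝ) + 1) + 1)) ^ 2))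
      = 1/(12*(m:ℝ)+12) - 1/(12*(m:ℝ)+24) := by
    rw [div_eq_mul_inv]
    have h12 : (12*(m:ℝ)+12) ≠ 0 := by positivity
    have h24 : (12*(m:ℝ)+24) ≠ 0 := by positivity
    have h3 : ((24:ℝ) + (m:ℝ) * 36 + (m:ℝ) ^ 2 * 12) ≠ 0 := by positivity
    field_simp
    rw [div_eq_iff (ne_of_gt (by nlinarith) : ((2 * ((m:ℝ) + 1) + 1) ^ 2 - 1) ≠ 0)]
    ring
  push_cast at key ⊢
  linarith [key]

lemma telescope (m : ℕ) : ∀ N : ℕ,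
    (1/(12*(m:ℝ)+13) - 1/(12*((m:ℝ)+N)+13)
      ≤ Real.log (stirlingSeq (m+1)) - Real.log (stirlingSeq (m+N+1))) ∧
    (Real.log (stirlingSeq (m+1)) - Real.log (stirlingSeq (m+N+1))
      ≤ 1/(12*(m:ℝ)+12) - 1/(12*((m:ℝ)+N)+12)) := by
  intro N
  induction N with
  | zero => simp
  | succ N ih =>
    have h1 := step_lower (m+N)
    have h2 := step_upper (m+N)
    push_cast at h1 h2
    have e1 : m + (N+1) + 1 = (m + N) + 2 := by omega
    have e2 : m + N + 1 = (m+N) + 1 := by omega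
    rw [e1]
    rw [e2] at ih
    push_cast
    constructor
    · have := ih.1
      have e3 : 12*((m:ℝ)+N)+25 = 12*((m:ℝ)+((N:ℝ)+1))+13 := by ring
      rw [e3] at h1
      linarith
    · have := ih.2
      have e3 : 12*((m:ℝ)+N)+24 = 12*((m:ℝ)+((N:ℝ)+1))+12 := by ring
      rw [e3] at h2
      linarith

lemma tendsto_aux (b : ℝ) : Tendsto (fun N : ℕ => 1/(12*((N:ℝ))+b)) atTop (𝓝 0) := by
  have hb : Tendsto (fun N : ℕ => 12*((N:ℝ))+b) atTop atTop := by
    apply tendsto_atTop_add_const_right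
    exact (tendsto_natCast_atTop_atTop (R := ℝ)).const_mul_atTop (by norm_num)
  simpa only [one_div, Pi.inv_def] using hb.inv_tendsto_atTop

lemma log_stirling_bounds (m : ℕ) :
    Real.log (Real.sqrt π) + 1/(12*(m:ℝ)+13) ≤ Real.log (stirlingSeq (m+1)) ∧
    Real.log (stirlingSeq (m+1)) ≤ Real.log (Real.sqrt π) + 1/(12*(m:ℝ)+12) := by
  have hπ : (0:ℝ) < Real.sqrt π := Real.sqrt_pos.mpr Real.pi_pos
  have hNat : Tendsto (fun N : ℕ => m + N + 1) atTop atTop :=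
    tendsto_atTop_atTop_of_monotone (fun a b hab => by omega) (fun x => ⟨x, by omega⟩)
  have htend : Tendsto (fun N : ℕ => Real.log (stirlingSeq (m+N+1))) atTop
      (𝓝 (Real.log (Real.sqrt π))) :=
    ((Real.continuousAt_log hπ.ne').tendsto.comp
      (Stirling.tendsto_stirlingSeq_sqrt_pi.comp hNat))
  have hg13 : Tendsto (fun N : ℕ => 1/(12*((m:ℝ)+N)+13)) atTop (𝓝 0) := by
    have := tendsto_aux (12*(m:ℝ)+13)
    refine this.congr (fun N => ?_)
    ring_nf
  have hg12 : Tendsto (fun N : ℕ => 1/(12*((m:ℝ)+N)+12)) atTop (𝓝 0) := by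
    have := tendsto_aux (12*(m:ℝ)+12)
    refine this.congr (fun N => ?_)
    ring_nf
  constructor
  · have hf : Tendsto (fun N : ℕ => Real.log (stirlingSeq (m+1))
        - (1/(12*(m:ℝ)+13) - 1/(12*((m:ℝ)+N)+13))) atTop
        (𝓝 (Real.log (stirlingSeq (m+1)) - (1/(12*(m:ℝ)+13) - 0))) :=
      tendsto_const_nhds.sub (tendsto_const_nhds.sub hg13)
    have h := le_of_tendsto_of_tendsto' htend hf
      (fun N => by linarith [(telescope m N).1])
    simp only [sub_zero] at h
    linarith
  · have hf : Tendsto (fun N : ℕ => Real.log (stirlingSeq (m+1))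
        - (1/(12*(m:ℝ)+12) - 1/(12*((m:ℝ)+N)+12))) atTop
        (𝓝 (Real.log (stirlingSeq (m+1)) - (1/(12*(m:ℝ)+12) - 0))) :=
      tendsto_const_nhds.sub (tendsto_const_nhds.sub hg12)
    have h := le_of_tendsto_of_tendsto' hf htend
      (fun N => by linarith [(telescope m N).2])
    simp only [sub_zero] at h
    linarith

lemma robbins (n : ℕ) (hn : 1 ≤ n) :
    Real.sqrt π * Real.exp (1/(12*(n:ℝ)+1)) * (Real.sqrt (2*n) * ((n:ℝ)/Real.exp 1)^n)
      ≤ (n.factorial : ℝ) ∧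
    (n.factorial : ℝ)
      ≤ Real.sqrt π * Real.exp (1/(12*(n:ℝ))) * (Real.sqrt (2*n) * ((n:ℝ)/Real.exp 1)^n) := by
  obtain ⟨m, rfl⟩ : ∃ m, n = m + 1 := ⟨n - 1, by omega⟩
  have hπ : (0:ℝ) < Real.sqrt π := Real.sqrt_pos.mpr Real.pi_pos
  have hnpos : (0:ℝ) < ((m+1 : ℕ) : ℝ) := by positivity
  have hd : (0:ℝ) < Real.sqrt (2*((m+1:ℕ):ℝ)) * (((m+1:ℕ):ℝ)/Real.exp 1)^(m+1) := by
    positivity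
  have hfac : ((m+1).factorial : ℝ)
      = stirlingSeq (m+1) * (Real.sqrt (2*((m+1:ℕ):ℝ)) * (((m+1:ℕ):ℝ)/Real.exp 1)^(m+1)) := by
    rw [stirlingSeq]
    field_simp
  have hspos : 0 < stirlingSeq (m+1) := by
    rw [stirlingSeq]
    have : (0:ℝ) < ((m+1).factorial : ℝ) := by positivity
    positivity
  have hb := log_stirling_bounds m
  have e13 : 12*((m:ℝ))+13 = 12*(((m+1:ℕ)):ℝ)+1 := by push_cast; ring
  have e12 : 12*((m:ℝ))+12 = 12*(((m+1:ℕ)):ℝ) := by push_cast; ring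
  rw [e13] at hb
  rw [e12] at hb
  constructor
  · have h1 : Real.sqrt π * Real.exp (1/(12*(((m+1:ℕ)):ℝ)+1)) ≤ stirlingSeq (m+1) := by
      have := Real.exp_le_exp.mpr hb.1
      rw [Real.exp_add, Real.exp_log hπ, Real.exp_log hspos] at this
      exact this
    rw [hfac]
    exact mul_le_mul_of_nonneg_right h1 hd.le
  · have h1 : stirlingSeq (m+1) ≤ Real.sqrt π * Real.exp (1/(12*(((m+1:ℕ)):ℝ))) := by
      have := Real.exp_le_exp.mpr hb.2
      rw [Real.exp_add, Real.exp_log hπ, Real.exp_log hspos] at this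
      exact this
    rw [hfac]
    exact mul_le_mul_of_nonneg_right h1 hd.le

theorem Delta_k_simple_bounds (k : ℕ) (hk : 1 ≤ k) :
    Real.sqrt (2 * Real.pi) * Real.exp (1 / (12 * k + 1) - 1 / (8 * k)) /
        (6 * ((k : ℝ) + 1) ^ ((3 : ℝ) / 2))
      ≤ (∫ u in (0 : ℝ)..1,
          u * (1 - u) * Real.exp ((k : ℝ) + u) * (Nat.factorial k : ℝ) /
            ((k : ℝ) + u) ^ (k + 2)) ∧
    (∫ u in (0 : ℝ)..1,
        u * (1 - u) * Real.exp ((k : ℝ) + u) * (Nat.factorial k : ℝ) /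
          ((k : ℝ) + u) ^ (k + 2))
      ≤ Real.sqrt (2 * Real.pi) * Real.exp (1 / (12 * k)) /
          (6 * (k : ℝ) ^ ((3 : ℝ) / 2)) := by
  set K : ℝ := (k : ℝ) with hKdef
  have hK1 : (1:ℝ) ≤ K := by rw [hKdef]; exact_mod_cast hk
  have hK0 : (0:ℝ) < K := by linarith
  set F : ℝ := (Nat.factorial k : ℝ) with hFdef
  have hF0 : (0:ℝ) < F := by positivity
  set s : ℝ := Real.sqrt K with hsdef
  have hs0 : 0 < s := Real.sqrt_pos.mpr hK0
  have hs2 : s^2 = K := Real.sq_sqrt hK0.le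
  set t : ℝ := Real.sqrt (K+1) with htdef
  have ht0 : 0 < t := Real.sqrt_pos.mpr (by linarith)
  have ht2 : t^2 = K+1 := Real.sq_sqrt (by linarith)
  -- rpow values
  have hrK : K ^ ((3:ℝ)/2) = K * s := by
    rw [show (3:ℝ)/2 = 1 + 1/2 by norm_num, Real.rpow_add hK0, Real.rpow_one,
      hsdef, Real.sqrt_eq_rpow]
  have hrK1 : (K+1) ^ ((3:ℝ)/2) = (K+1) * t := by
    rw [show (3:ℝ)/2 = 1 + 1/2 by norm_num, Real.rpow_add (by linarith), Real.rpow_one,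
      htdef, Real.sqrt_eq_rpow]
  -- sqrt(2π) = √2 √π
  have h2pi : Real.sqrt (2*π) = Real.sqrt 2 * Real.sqrt π := Real.sqrt_mul (by norm_num) _
  -- robbins in convenient form
  have hrob := robbins k hk
  have hsqrt2K : Real.sqrt (2*(k:ℝ)) = Real.sqrt 2 * s := by
    rw [Real.sqrt_mul (by norm_num), hsdef]
  have hKe : ((k:ℝ)/Real.exp 1)^k = K^k / Real.exp K := by
    rw [div_pow, Real.exp_one_pow]
  rw [hsqrt2K, hKe] at hrob
  -- claim U
  have claimU : ∀ u : ℝ, 0 ≤ u → u ≤ 1 → Real.exp u * K^(k+2) ≤ (K+u)^(k+2) := by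
    intro u hu0 hu1
    set x : ℝ := u / K with hxdef
    have hx0 : 0 ≤ x := by positivity
    have hx1 : x ≤ 1 := by rw [hxdef, div_le_one hK0]; linarith
    have hlog := logA hx0 hx1
    have hux : u = K * x := by rw [hxdef]; field_simp
    have hu : u ≤ ((k:ℝ)+2) * Real.log (1+x) := by
      have h1 : ((k:ℝ)+2) * (2*x/(2+x)) - u = x*(4 - K*x)/(2+x) := by
        rw [hux]; field_simp; ring
      have h2 : 0 ≤ x*(4 - K*x)/(2+x) := by
        apply div_nonneg _ (by linarith)
        apply mul_nonneg hx0
        have : K*x = u := hux.symm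
        nlinarith
      have h3 : ((k:ℝ)+2) * (2*x/(2+x)) ≤ ((k:ℝ)+2) * Real.log (1+x) :=
        mul_le_mul_of_nonneg_left hlog (by positivity)
      linarith
    have hexp : Real.exp u ≤ (1+x)^(k+2) := by
      calc Real.exp u ≤ Real.exp (((k:ℝ)+2) * Real.log (1+x)) := Real.exp_le_exp.mpr hu
        _ = (1+x)^(k+2) := by
            rw [show ((k:ℝ)+2) = ((k+2 : ℕ) : ℝ) by push_cast; ring,
              Real.exp_nat_mul, Real.exp_log (by linarith)]
    calc Real.exp u * K^(k+2) ≤ (1+x)^(k+2) * K^(k+2) :=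
          mul_le_mul_of_nonneg_right hexp (by positivity)
      _ = ((1+x)*K)^(k+2) := by rw [← mul_pow]
      _ = (K+u)^(k+2) := by rw [hxdef]; congr 1; field_simp
  -- claim L
  have claimL : ∀ u : ℝ, 0 ≤ u → u ≤ 1 →
      (K+u)^(k+2) ≤ Real.exp (u + 1/(8*K)) * (s * K^k) * ((K+1) * t) := by
    intro u hu0 hu1
    have hKu0 : (0:ℝ) < K + u := by linarith
    set x : ℝ := u / K with hxdef
    have hx0 : 0 ≤ x := by positivity
    have hux : u = K * x := by rw [hxdef]; field_simp
    have hlog := logB hx0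
    have hq : (2*K+1) * Real.log (1+x) ≤ 2*u + 1/(4*K) := by
      have h3 : (2*K+1) * Real.log (1+x) ≤ (2*K+1) * (x*(x+6)/(4*x+6)) :=
        mul_le_mul_of_nonneg_left hlog (by linarith)
      have h1 : (2*u + 1/(4*K)) - (2*K+1) * (x*(x+6)/(4*x+6))
          = (6*K - 24*K*(u*(1-u)) + 4*(u*(1-u)))/(4*K*(4*u+6*K)) := by
        rw [hxdef]; field_simp; ring
      have hnum : 0 ≤ 6*K - 24*K*(u*(1-u)) + 4*(u*(1-u)) := by
        nlinarith [mul_nonneg hK0.le (sq_nonneg (2*u-1)), mul_nonneg hu0 (by linarith : (0:ℝ) ≤ 1-u)]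
      have h2 : 0 ≤ (6*K - 24*K*(u*(1-u)) + 4*(u*(1-u)))/(4*K*(4*u+6*K)) := by
        apply div_nonneg hnum; positivity
      linarith
    -- squared core
    have hcore : (K+u)^(2*k+1) ≤ Real.exp (2*u + 1/(4*K)) * K^(2*k+1) := by
      have hexp : (1+x)^(2*k+1) ≤ Real.exp (2*u + 1/(4*K)) := by
        calc (1+x)^(2*k+1) = Real.exp (((2*k+1 : ℕ):ℝ) * Real.log (1+x)) := by
              rw [Real.exp_nat_mul, Real.exp_log (by linarith)]
          _ ≤ Real.exp (2*u + 1/(4*K)) := by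
              apply Real.exp_le_exp.mpr
              have : ((2*k+1 : ℕ):ℝ) = 2*K+1 := by push_cast; ring
              rw [this]; exact hq
      calc (K+u)^(2*k+1) = ((1+x)*K)^(2*k+1) := by
            rw [hxdef]; congr 1; field_simp; try ring
        _ = (1+x)^(2*k+1) * K^(2*k+1) := by rw [mul_pow]
        _ ≤ Real.exp (2*u + 1/(4*K)) * K^(2*k+1) :=
            mul_le_mul_of_nonneg_right hexp (by positivity)
    -- step B : (K+u)^k * √(K+u) ≤ exp(u+1/(8K)) * (s * K^k)
    set r : ℝ := Real.sqrt (K+u) with hrdef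
    have hr0 : 0 < r := Real.sqrt_pos.mpr hKu0
    have hr2 : r^2 = K+u := Real.sq_sqrt hKu0.le
    have hstepB : (K+u)^k * r ≤ Real.exp (u + 1/(8*K)) * (s * K^k) := by
      have hsq : ((K+u)^k * r)^2 ≤ (Real.exp (u + 1/(8*K)) * (s * K^k))^2 := by
        have e1 : ((K+u)^k * r)^2 = (K+u)^(2*k+1) := by
          rw [mul_pow, hr2, ← pow_mul]; ring
        have e2 : (Real.exp (u + 1/(8*K)) * (s * K^k))^2
            = Real.exp (2*u + 1/(4*K)) * K^(2*k+1) := by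
          rw [mul_pow, mul_pow, ← Real.exp_nat_mul, hs2, ← pow_mul]

          rw [show ((2:ℕ):ℝ) * (u + 1/(8*K)) = 2*u + 1/(4*K) by push_cast; field_simp; try ring]
          ring
        rw [e1, e2]; exact hcore
      have h1 : 0 ≤ (K+u)^k * r := by positivity
      have h2 : 0 ≤ Real.exp (u + 1/(8*K)) * (s * K^k) := by positivity
      exact (pow_le_pow_iff_left₀ h1 h2 two_ne_zero).mp hsq
    have hstepA : (K+u) * r ≤ (K+1) * t := by
      apply mul_le_mul (by linarith) _ hr0.le (by linarith)
      rw [hrdef, htdef]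
      exact Real.sqrt_le_sqrt (by linarith)
    calc (K+u)^(k+2) = ((K+u)^k * r) * ((K+u) * r) := by
          have : r * r = K + u := by nlinarith [hr2]
          calc (K+u)^(k+2) = (K+u)^k * ((K+u) * (K+u)) := by ring
            _ = (K+u)^k * ((r*r) * (K+u)) := by rw [this]
            _ = ((K+u)^k * r) * ((K+u) * r) := by ring
      _ ≤ (Real.exp (u + 1/(8*K)) * (s * K^k)) * ((K+1) * t) := by
          apply mul_le_mul hstepB hstepA (by positivity) (by positivity)
  rw [← hKdef] at hrob
  -- constants
  set Cup : ℝ := Real.sqrt (2*π) * Real.exp (1/(12*K)) / (K * s) with hCup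
  set Clow : ℝ := Real.sqrt (2*π) * Real.exp (1/(12*K+1) - 1/(8*K)) / ((K+1) * t) with hClow
  have hCup0 : 0 ≤ Cup := by rw [hCup]; positivity
  have hClow0 : 0 ≤ Clow := by rw [hClow]; positivity
  have hexpK0 : (0:ℝ) < Real.exp K := Real.exp_pos K
  -- pointwise upper
  have baseU : ∀ u : ℝ, 0 ≤ u → u ≤ 1 →
      Real.exp (K+u) * F ≤ Cup * (K+u)^(k+2) := by
    intro u hu0 hu1
    have h1 : Real.exp (K+u) * F
        ≤ Real.exp (K+u) * (Real.sqrt π * Real.exp (1/(12*K)) * (Real.sqrt 2 * s * (K^k / Real.exp K))) :=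
      mul_le_mul_of_nonneg_left hrob.2 (Real.exp_pos _).le
    have h2 : Real.exp (K+u) * (Real.sqrt π * Real.exp (1/(12*K)) * (Real.sqrt 2 * s * (K^k / Real.exp K)))
        = Cup * (Real.exp u * K^(k+2)) := by
      rw [hCup, h2pi, Real.exp_add]
      rw [show K = s^2 from hs2.symm]
      field_simp
      ring
    have h3 : Cup * (Real.exp u * K^(k+2)) ≤ Cup * (K+u)^(k+2) :=
      mul_le_mul_of_nonneg_left (claimU u hu0 hu1) hCup0
    linarith
  -- pointwise lower
  have baseL : ∀ u : ℝ, 0 ≤ u → u ≤ 1 →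
      Clow * (K+u)^(k+2) ≤ Real.exp (K+u) * F := by
    intro u hu0 hu1
    have h1 : Clow * (K+u)^(k+2)
        ≤ Clow * (Real.exp (u + 1/(8*K)) * (s * K^k) * ((K+1) * t)) :=
      mul_le_mul_of_nonneg_left (claimL u hu0 hu1) hClow0
    have h2 : Clow * (Real.exp (u + 1/(8*K)) * (s * K^k) * ((K+1) * t))
        = Real.exp u * Real.exp K *
            (Real.sqrt π * Real.exp (1/(12*K+1)) * (Real.sqrt 2 * s * (K^k / Real.exp K))) := by
      rw [hClow, h2pi, Real.exp_sub, Real.exp_add]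
      have htne : (K+1)*t ≠ 0 := by positivity
      field_simp
    have h3 : Real.exp u * Real.exp K *
          (Real.sqrt π * Real.exp (1/(12*K+1)) * (Real.sqrt 2 * s * (K^k / Real.exp K)))
        ≤ Real.exp u * Real.exp K * F :=
      mul_le_mul_of_nonneg_left hrob.1 (by positivity)
    have h4 : Real.exp u * Real.exp K * F = Real.exp (K+u) * F := by
      rw [Real.exp_add]; ring
    linarith
  -- integrability
  have hdenne : ∀ v ∈ Set.uIcc (0:ℝ) 1, ((K + v)^(k+2)) ≠ 0 := by
    intro v hv
    rw [Set.uIcc_of_le (by norm_num : (0:ℝ) ≤ 1)] at hv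
    have : 0 < K + v := by linarith [hv.1]
    positivity
  have hcont : ContinuousOn
      (fun u : ℝ => u * (1 - u) * Real.exp (K + u) * F / (K + u) ^ (k + 2))
      (Set.uIcc (0:ℝ) 1) := by
    apply ContinuousOn.div
    · apply Continuous.continuousOn
      fun_prop
    · apply Continuous.continuousOn
      fun_prop
    · exact hdenne
  have hintf : IntervalIntegrable
      (fun u : ℝ => u * (1 - u) * Real.exp (K + u) * F / (K + u) ^ (k + 2))
      MeasureTheory.volume 0 1 := hcont.intervalIntegrable
  have hintc : ∀ C : ℝ, IntervalIntegrable (fun u : ℝ => u * (1-u) * C)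
      MeasureTheory.volume 0 1 := by
    intro C
    apply Continuous.intervalIntegrable
    fun_prop
  have hIconst : ∀ C : ℝ, (∫ u in (0:ℝ)..1, u*(1-u)*C) = C/6 := by
    intro C
    have he : (fun u : ℝ => u*(1-u)*C) = fun u : ℝ => (u - u^2)*C := by
      funext u; ring
    rw [he, intervalIntegral.integral_mul_const]
    have h1 : IntervalIntegrable (fun u : ℝ => u) MeasureTheory.volume 0 1 :=
      Continuous.intervalIntegrable (by fun_prop) _ _
    have h2 : IntervalIntegrable (fun u : ℝ => u^2) MeasureTheory.volume 0 1 :=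
      Continuous.intervalIntegrable (by fun_prop) _ _
    rw [intervalIntegral.integral_sub h1 h2, integral_id, integral_pow]
    norm_num
    try ring
  constructor
  · -- lower bound
    have hmono := intervalIntegral.integral_mono_on (by norm_num : (0:ℝ) ≤ 1)
      (hintc Clow) hintf ?_
    · rw [hIconst Clow] at hmono
      refine le_trans (le_of_eq ?_) hmono
      rw [hClow, hrK1]
      field_simp
      try ring
    · intro u hu
      obtain ⟨hu0, hu1⟩ := hu
      have hKu : (0:ℝ) < K + u := by linarith
      have hden : (0:ℝ) < (K+u)^(k+2) := by positivity
      rw [le_div_iff₀ hden]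
      have hmul := mul_le_mul_of_nonneg_left (baseL u hu0 hu1)
        (mul_nonneg hu0 (by linarith : (0:ℝ) ≤ 1-u))
      calc u*(1-u)*Clow*(K+u)^(k+2) = (u*(1-u))*(Clow*(K+u)^(k+2)) := by ring
        _ ≤ (u*(1-u))*(Real.exp (K+u)*F) := hmul
        _ = u*(1-u)*Real.exp (K+u)*F := by ring
  · -- upper bound
    have hmono := intervalIntegral.integral_mono_on (by norm_num : (0:ℝ) ≤ 1)
      hintf (hintc Cup) ?_
    · rw [hIconst Cup] at hmono
      refine le_trans hmono (le_of_eq ?_)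
      rw [hCup, hrK]
      field_simp
      try ring
    · intro u hu
      obtain ⟨hu0, hu1⟩ := hu
      have hKu : (0:ℝ) < K + u := by linarith
      have hden : (0:ℝ) < (K+u)^(k+2) := by positivity
      rw [div_le_iff₀ hden]
      have hmul := mul_le_mul_of_nonneg_left (baseU u hu0 hu1)
        (mul_nonneg hu0 (by linarith : (0:ℝ) ≤ 1-u))
      calc u*(1-u)*Real.exp (K+u)*F = (u*(1-u))*(Real.exp (K+u)*F) := by ring
        _ ≤ (u*(1-u))*(Cup*(K+u)^(k+2)) := hmul
        _ = u*(1-u)*Cup*(K+u)^(k+2) := by ring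
end

section
/- For every integer k ≥ 1, with F(k) = ∫_0^1 e^{(u-1/2)²/(4k)}·u(1-u)/(k+u)^{3/2} du and Δ_{k+1} = ∫_0^1 u(1-u)e^{k+u}k!/(k+u)^{k+2} du, one has √(2π)·e^{1/(12k+1) - 1/(8k)}·F(k) ≤ Δ_{k+1} ≤ √(2π)·e^{1/(48k)}·F(k). -/
/-!
Write `k! = stirlingSeq k · √(2k) (k/e)^k`. Then the integrand of `Δ_{k+1}` is the integrand of
`F(k)` times `√2 · stirlingSeq k · exp ψ(k, u)`, where
`ψ(k, u) = u - (k + 1/2) log (1 + u/k) - (u - 1/2)² / (4k)`.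
Robbins' bounds `√π e^{1/(12k+1)} ≤ stirlingSeq k ≤ √π e^{1/(12k)}` follow from the series for the
successive differences of `log stirlingSeq`. Using `u(1-u) = 1/4 - (u-1/2)²`, the elementary
estimates `2x/(x+2) ≤ log (1+x) ≤ x - x²/2 + x³/3` give `-1/(8k) ≤ ψ(k, u) ≤ -1/(16k)` on `[0, 1]`,
and the pointwise comparison of the integrands integrates to both bounds.
-/

open Real Set Filter Topology Stirling
open scoped Nat

lemma log_one_add_le_cubic {x : ℝ} (hx : -1 < x) :
    log (1 + x) ≤ x - x ^ 2 / 2 + x ^ 3 / 3 := by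
  set g : ℝ → ℝ := fun y => y - y ^ 2 / 2 + y ^ 3 / 3 - log (1 + y)
  -- `g' y = 1 - y + y ^ 2 - 1 / (1 + y) = y ^ 3 / (1 + y)` has the sign of `y`
  have hg : ∀ y ∈ Ioi (-1 : ℝ), HasDerivAt g (y ^ 3 / (1 + y)) y := by
    intro y hy
    have hy : 1 + y ≠ 0 := by rw [mem_Ioi] at hy; linarith
    refine ((((hasDerivAt_id y).sub ((hasDerivAt_pow 2 y).div_const 2)).add
      ((hasDerivAt_pow 3 y).div_const 3)).sub
        (((hasDerivAt_id y).const_add 1).log hy)).congr_deriv ?_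
    simp only [id]
    field_simp
    ring
  have hcont : ContinuousOn g (Ioi (-1)) := fun y hy => (hg y hy).continuousAt.continuousWithinAt
  have hg0 : g 0 = 0 := by simp [g]
  suffices 0 ≤ g x by simp only [g] at this; linarith
  rcases le_total 0 x with h | h
  · have hmono : MonotoneOn g (Ici 0) := by
      refine monotoneOn_of_hasDerivWithinAt_nonneg (convex_Ici 0)
        (hcont.mono fun y hy => by rw [mem_Ici] at hy; rw [mem_Ioi]; linarith)
        (fun y hy => (hg y ?_).hasDerivWithinAt) fun y hy => ?_ <;>
      rw [interior_Ici, mem_Ioi] at hy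
      · rw [mem_Ioi]; linarith
      · positivity
    simpa [hg0] using hmono self_mem_Ici h h
  · have hanti : AntitoneOn g (Ioc (-1) 0) := by
      refine antitoneOn_of_hasDerivWithinAt_nonpos (convex_Ioc (-1) 0)
        (hcont.mono Ioc_subset_Ioi_self)
        (fun y hy => (hg y ?_).hasDerivWithinAt) fun y hy => ?_ <;>
      rw [interior_Ioc, mem_Ioo] at hy
      · exact hy.1
      · exact div_nonpos_of_nonpos_of_nonneg (Odd.pow_nonpos (by decide) hy.2.le) (by linarith)
    simpa [hg0] using hanti ⟨hx, h⟩ ⟨by norm_num, le_rfl⟩ h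

namespace Stirling

lemma tendsto_one_div_twelve_mul_add (c : ℝ) :
    Tendsto (fun n : ℕ => 1 / (12 * ((n : ℝ) + 1) + c)) atTop (𝓝 0) :=
  tendsto_const_nhds.div_atTop <| tendsto_atTop_add_const_right _ c <|
    (tendsto_atTop_add_const_right _ 1 tendsto_natCast_atTop_atTop).const_mul_atTop (by norm_num)

lemma monotone_log_stirlingSeq_sub :
    Monotone fun n : ℕ => log (stirlingSeq (n + 1)) - 1 / (12 * ((n : ℝ) + 1)) := by
  refine monotone_nat_of_le_succ fun n => ?_
  have h := log_stirlingSeq_sdiff_le (n + 1)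
  push_cast at h ⊢
  have : 1 / (12 * ((n : ℝ) + 1)) - 1 / (12 * ((n : ℝ) + 1 + 1)) =
      1 / (12 * ((n : ℝ) + 1) * ((n : ℝ) + 1 + 1)) := by
    field_simp; ring
  linarith

/-- The first term of the series `log_stirlingSeq_sdiff_hasSum` already beats the decrease of
`1 / (12 n + 1)`. -/
lemma antitone_log_stirlingSeq_sub :
    Antitone fun n : ℕ => log (stirlingSeq (n + 1)) - 1 / (12 * ((n : ℝ) + 1) + 1) := by
  refine antitone_nat_of_succ_le fun n => ?_
  have h := le_hasSum (log_stirlingSeq_sdiff_hasSum n) 0 fun j _ => by positivity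
  have hterm : 1 / (12 * ((n : ℝ) + 1) + 1) - 1 / (12 * ((n : ℝ) + 1 + 1) + 1) ≤
      1 / (2 * ((0 + 1 : ℕ) : ℝ) + 1) * ((1 / (2 * ((n + 1 : ℕ) : ℝ) + 1)) ^ 2) ^ (0 + 1) := by
    rw [div_sub_div _ _ (by positivity) (by positivity)]
    push_cast
    field_simp
    nlinarith [(n.cast_nonneg : (0 : ℝ) ≤ n)]
  show log (stirlingSeq (n + 2)) - 1 / (12 * (((n + 1 : ℕ) : ℝ) + 1) + 1) ≤ _
  push_cast
  linarith

theorem stirlingSeq_le_sqrt_pi_mul_exp (n : ℕ) : stirlingSeq n ≤ √π * exp (1 / (12 * n)) := by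
  obtain _ | m := n
  · simp
  have hlim := ((tendsto_stirlingSeq_sqrt_pi.comp (tendsto_add_atTop_nat 1)).log
    (by positivity)).sub (by simpa using tendsto_one_div_twelve_mul_add 0)
  have h := monotone_log_stirlingSeq_sub.ge_of_tendsto (by simpa using hlim) m
  rw [← exp_log (stirlingSeq'_pos m), ← exp_log (by positivity : 0 < √π), ← exp_add, exp_le_exp]
  push_cast
  linarith

theorem sqrt_pi_mul_exp_le_stirlingSeq {n : ℕ} (hn : n ≠ 0) :
    √π * exp (1 / (12 * n + 1)) ≤ stirlingSeq n := by
  obtain ⟨m, rfl⟩ := Nat.exists_eq_succ_of_ne_zero hn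
  have hlim := ((tendsto_stirlingSeq_sqrt_pi.comp (tendsto_add_atTop_nat 1)).log
    (by positivity)).sub (tendsto_one_div_twelve_mul_add 1)
  have h := antitone_log_stirlingSeq_sub.le_of_tendsto (by simpa using hlim) m
  rw [← exp_log (stirlingSeq'_pos m), ← exp_log (by positivity : 0 < √π), ← exp_add, exp_le_exp]
  push_cast
  linarith

end Stirling

noncomputable def logIntegrandRatio (K u : ℝ) : ℝ :=
  u - (K + 1 / 2) * log (1 + u / K) - (u - 1 / 2) ^ 2 / (4 * K)

lemma sq_sub_half_div_eq {K : ℝ} (hK : K ≠ 0) (u : ℝ) :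
    (u - 1 / 2) ^ 2 / (4 * K) = 1 / (16 * K) - u * (1 - u) / (4 * K) := by
  field_simp
  ring

lemma logIntegrandRatio_le {K u : ℝ} (hK : 1 ≤ 2 * K) (hu₀ : 0 ≤ u) (hu₁ : u ≤ 1) :
    logIntegrandRatio K u ≤ -(1 / (16 * K)) := by
  have hK₀ : 0 < K := by linarith
  have hlog := le_log_one_add_of_nonneg (div_nonneg hu₀ hK₀.le)
  have hrat : u + u * (1 - u) / (4 * K) ≤ (K + 1 / 2) * (2 * (u / K) / (u / K + 2)) := by
    rw [← sub_nonneg]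
    have e : (K + 1 / 2) * (2 * (u / K) / (u / K + 2)) - (u + u * (1 - u) / (4 * K)) =
        u * (1 - u) * (2 * K - u) / (4 * K * (2 * K + u)) := by
      field_simp
      ring
    rw [e]
    exact div_nonneg (mul_nonneg (mul_nonneg hu₀ (by linarith)) (by linarith)) (by positivity)
  have := mul_le_mul_of_nonneg_left hlog (by linarith : 0 ≤ K + 1 / 2)
  rw [logIntegrandRatio, sq_sub_half_div_eq hK₀.ne']
  linarith

lemma neg_le_logIntegrandRatio {K u : ℝ} (hK : 1 ≤ K) (hu₀ : 0 ≤ u) (hu₁ : u ≤ 1) :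
    -(1 / (8 * K)) ≤ logIntegrandRatio K u := by
  have hK₀ : 0 < K := by linarith
  rw [logIntegrandRatio, sq_sub_half_div_eq hK₀.ne']
  set c := K + 1 / 2 with hc_def
  have hc : 0 < c := by positivity
  set v := u - 1 / 2 with hv_def
  set x := 1 / (2 * K) with hx_def
  -- `1 + u / K = (1 + v / c) * (1 + x)`: expand around the midpoint `u = 1 / 2`
  have hv : -1 < v / c := by rw [lt_div_iff₀ hc]; linarith
  have hsplit : log (1 + u / K) = log (1 + v / c) + log (1 + x) := by
    rw [← log_mul (by linarith) (by positivity), hc_def, hv_def, hx_def]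
    congr 1
    field_simp
    ring
  have h₁ : c * log (1 + v / c) ≤ v - v ^ 2 / (4 * K) := by
    refine (mul_le_mul_of_nonneg_left (log_one_add_le_cubic hv) hc.le).trans ?_
    rw [← sub_nonneg]
    have e : v - v ^ 2 / (4 * K) - c * (v / c - (v / c) ^ 2 / 2 + (v / c) ^ 3 / 3) =
        v ^ 2 * (3 * c * (2 * K - 1) - 8 * K * v) / (24 * K * c ^ 2) := by
      field_simp
      ring
    have : 0 ≤ 3 * c * (2 * K - 1) - 8 * K * v := by
      rw [hc_def, hv_def]
      nlinarith
    rw [e]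
    positivity
  have h₂ : c * log (1 + x) ≤ 1 / 2 + 1 / (8 * K) := by
    have hx : -1 < x := by linarith [show 0 < x by positivity]
    refine (mul_le_mul_of_nonneg_left (log_one_add_le_cubic hx) hc.le).trans ?_
    rw [← sub_nonneg]
    have e : 1 / 2 + 1 / (8 * K) - c * (x - x ^ 2 / 2 + x ^ 3 / 3) = (K - 1) / (48 * K ^ 3) := by
      rw [hc_def, hx_def]
      field_simp
      ring
    rw [e]
    exact div_nonneg (by linarith) (by positivity)
  have e : v - v ^ 2 / (4 * K) + (1 / 2 + 1 / (8 * K)) =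
      u + u * (1 - u) / (4 * K) + 1 / (16 * K) := by
    rw [hv_def]
    field_simp
    ring
  have h8 : 1 / (8 * K) = 2 * (1 / (16 * K)) := by field_simp; norm_num
  rw [hsplit, mul_add]
  linarith

lemma exp_mul_factorial_div_pow_eq {k : ℕ} (hk : k ≠ 0) {u : ℝ} (hu : 0 < k + u) :
    exp (k + u) * k ! / ((k : ℝ) + u) ^ (k + 2) =
      √2 * stirlingSeq k * exp (logIntegrandRatio k u) *
        (exp ((u - 1 / 2) ^ 2 / (4 * k)) / ((k : ℝ) + u) ^ (3 / 2 : ℝ)) := by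
  have hK : (0 : ℝ) < k := by positivity
  have hS : 0 < stirlingSeq k := (by positivity : (0 : ℝ) < √π).trans_le (sqrt_pi_le_stirlingSeq hk)
  refine log_injOn_pos (mem_Ioi.2 (by positivity)) (mem_Ioi.2 (by positivity)) ?_
  have h1 : 1 + u / k = (k + u) / k := by field_simp
  simp (disch := positivity) only [log_mul, log_div, log_exp, log_pow, log_rpow, log_sqrt,
    logIntegrandRatio, log_stirlingSeq_formula, h1]
  push_cast
  ring

lemma intervalIntegral.mul_integral_le_integral_le_mul_integral {f g r : ℝ → ℝ} {a b c d : ℝ}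
    (hab : a ≤ b) (hf : IntervalIntegrable f MeasureTheory.volume a b)
    (hg : IntervalIntegrable g MeasureTheory.volume a b)
    (hfg : ∀ x ∈ Icc a b, f x = r x * g x) (hg₀ : ∀ x ∈ Icc a b, 0 ≤ g x)
    (hr : ∀ x ∈ Icc a b, c ≤ r x ∧ r x ≤ d) :
    c * ∫ x in a..b, g x ≤ ∫ x in a..b, f x ∧ ∫ x in a..b, f x ≤ d * ∫ x in a..b, g x := by
  rw [← intervalIntegral.integral_const_mul, ← intervalIntegral.integral_const_mul]
  constructor
  · refine intervalIntegral.integral_mono_on hab (hg.const_mul c) hf fun x hx => ?_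
    rw [hfg x hx]
    exact mul_le_mul_of_nonneg_right (hr x hx).1 (hg₀ x hx)
  · refine intervalIntegral.integral_mono_on hab hf (hg.const_mul d) fun x hx => ?_
    rw [hfg x hx]
    exact mul_le_mul_of_nonneg_right (hr x hx).2 (hg₀ x hx)

lemma sqrt_two_mul_stirlingSeq_mul_exp_logIntegrandRatio_bounds {k : ℕ} (hk : k ≠ 0) {u : ℝ}
    (hu₀ : 0 ≤ u) (hu₁ : u ≤ 1) :
    √(2 * π) * exp (1 / (12 * k + 1) - 1 / (8 * k)) ≤
        √2 * stirlingSeq k * exp (logIntegrandRatio k u) ∧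
      √2 * stirlingSeq k * exp (logIntegrandRatio k u) ≤ √(2 * π) * exp (1 / (48 * k)) := by
  have hK : (1 : ℝ) ≤ k := by exact_mod_cast Nat.one_le_iff_ne_zero.2 hk
  have hS : 0 ≤ √2 * stirlingSeq k :=
    mul_nonneg (sqrt_nonneg 2) ((sqrt_nonneg π).trans (sqrt_pi_le_stirlingSeq hk))
  rw [sqrt_mul zero_le_two]
  constructor
  · calc √2 * √π * exp (1 / (12 * k + 1) - 1 / (8 * k))
        = √2 * (√π * exp (1 / (12 * k + 1))) * exp (-(1 / (8 * k))) := by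
          rw [sub_eq_add_neg, exp_add]; ring
      _ ≤ √2 * stirlingSeq k * exp (logIntegrandRatio k u) := by
          gcongr
          · exact sqrt_pi_mul_exp_le_stirlingSeq hk
          · exact neg_le_logIntegrandRatio hK hu₀ hu₁
  · calc √2 * stirlingSeq k * exp (logIntegrandRatio k u)
        ≤ √2 * (√π * exp (1 / (12 * k))) * exp (-(1 / (16 * k))) := by
          gcongr
          · exact stirlingSeq_le_sqrt_pi_mul_exp k
          · exact logIntegrandRatio_le (by linarith) hu₀ hu₁
      _ = √2 * √π * exp (1 / (48 * k)) := by
          rw [mul_assoc, mul_assoc, ← exp_add]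
          field_simp
          ring_nf

theorem Delta_k_F_bounds (k : ℕ) (hk : 1 ≤ k) :
    Real.sqrt (2 * Real.pi) * Real.exp (1 / (12 * k + 1) - 1 / (8 * k)) *
        (∫ u in (0 : ℝ)..1,
          Real.exp ((u - 1 / 2) ^ 2 / (4 * k)) * (u * (1 - u)) /
            ((k : ℝ) + u) ^ ((3 : ℝ) / 2))
      ≤ (∫ u in (0 : ℝ)..1,
          u * (1 - u) * Real.exp ((k : ℝ) + u) * (Nat.factorial k : ℝ) /
            ((k : ℝ) + u) ^ (k + 2)) ∧
    (∫ u in (0 : ℝ)..1,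
        u * (1 - u) * Real.exp ((k : ℝ) + u) * (Nat.factorial k : ℝ) /
          ((k : ℝ) + u) ^ (k + 2))
      ≤ Real.sqrt (2 * Real.pi) * Real.exp (1 / (48 * k)) *
          (∫ u in (0 : ℝ)..1,
            Real.exp ((u - 1 / 2) ^ 2 / (4 * k)) * (u * (1 - u)) /
              ((k : ℝ) + u) ^ ((3 : ℝ) / 2)) := by
  have hk₀ : k ≠ 0 := by omega
  have hpos : ∀ u ∈ uIcc (0 : ℝ) 1, 0 < (k : ℝ) + u := fun u hu => by
    rw [uIcc_of_le zero_le_one] at hu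
    have := hu.1
    positivity
  refine intervalIntegral.mul_integral_le_integral_le_mul_integral zero_le_one
    (r := fun u => √2 * stirlingSeq k * exp (logIntegrandRatio k u))
    (ContinuousOn.intervalIntegrable ?_) (ContinuousOn.intervalIntegrable ?_)
    (fun u hu => ?_) (fun u hu => ?_)
    (fun u hu => sqrt_two_mul_stirlingSeq_mul_exp_logIntegrandRatio_bounds hk₀ hu.1 hu.2)
  · exact ContinuousOn.div (by fun_prop) (by fun_prop) fun u hu => (pow_pos (hpos u hu) _).ne'
  · exact ContinuousOn.div (by fun_prop) ((continuousOn_id.const_add _).rpow_const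
      fun u hu => Or.inl (hpos u hu).ne') fun u hu => (rpow_pos_of_pos (hpos u hu) _).ne'
  · rw [mul_assoc, mul_div_assoc, exp_mul_factorial_div_pow_eq hk₀ (hpos u (Icc_subset_uIcc hu))]
    ring
  · obtain ⟨hu₀, hu₁⟩ := hu
    have : 0 ≤ 1 - u := sub_nonneg.2 hu₁
    positivity
end

section
/- The sequence Δ_k = ∫_0^1 u(1-u)·e^{k-1+u}·(k-1)!/(k-1+u)^{k+1} du is strictly decreasing for k ≥ 2, i.e., Δ_{k+1} < Δ_k for all k ≥ 2. -/
/-!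
Increasing `k` by one multiplies the integrand of `Δ_k` by `e k (k - 1 + u)^(k+1) / (k + u)^(k+2)`.
With `x = k + u ∈ (k, k + 1]` this factor is below one: `(1 - 1/x)^(k+1) ≤ exp (-(k+1)/x) ≤ e⁻¹`
and `k < x`. So the integrands decrease pointwise, strictly inside `(0, 1)`.
-/

open Real Set
open scoped Nat

noncomputable def deltaKernel (k : ℕ) (u : ℝ) : ℝ :=
  u * (1 - u) * exp ((k : ℝ) - 1 + u) * ((k - 1)! : ℝ) / ((k : ℝ) - 1 + u) ^ (k + 1)

lemma exp_one_mul_sub_one_pow_le {x : ℝ} {n : ℕ} (hx : 1 ≤ x) (hxn : x ≤ n) :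
    exp 1 * (x - 1) ^ n ≤ x ^ n := by
  have hx0 : 0 < x := by linarith
  have hn : (0 : ℝ) < n := by linarith
  have h : ((x - 1) / x) ^ n ≤ exp (-1) :=
    calc ((x - 1) / x) ^ n = (1 - (n / x) / n) ^ n := by field_simp
      _ ≤ exp (-(n / x)) := one_sub_div_pow_le_exp_neg (div_le_self hn.le hx)
      _ ≤ exp (-1) := exp_le_exp.2 (neg_le_neg ((one_le_div hx0).2 hxn))
  rw [div_pow, div_le_iff₀ (by positivity)] at h
  calc exp 1 * (x - 1) ^ n ≤ exp 1 * (exp (-1) * x ^ n) := by gcongr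
    _ = x ^ n := by rw [exp_neg, ← mul_assoc, mul_inv_cancel₀ (exp_pos 1).ne', one_mul]

lemma exp_one_mul_mul_sub_one_pow_lt {x : ℝ} {k : ℕ} (hx : 1 ≤ x) (hkx : k < x)
    (hxk : x ≤ k + 1) : exp 1 * k * (x - 1) ^ (k + 1) < x ^ (k + 2) :=
  calc exp 1 * k * (x - 1) ^ (k + 1) = k * (exp 1 * (x - 1) ^ (k + 1)) := by ring
    _ ≤ k * x ^ (k + 1) := by
        gcongr
        exact exp_one_mul_sub_one_pow_le hx (by exact_mod_cast hxk)
    _ < x * x ^ (k + 1) := by gcongr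
    _ = x ^ (k + 2) := by ring

lemma continuousOn_deltaKernel {k : ℕ} (hk : 1 < k) : ContinuousOn (deltaKernel k) (Icc 0 1) := by
  have hk' : (1 : ℝ) < k := by exact_mod_cast hk
  refine ContinuousOn.div (by fun_prop) (by fun_prop) fun u hu => ?_
  have : 0 < (k : ℝ) - 1 + u := by linarith [hu.1]
  positivity

lemma deltaKernel_succ_lt {k : ℕ} (hk : 1 ≤ k) {u : ℝ} (hu : u ∈ Ioo 0 1) :
    deltaKernel (k + 1) u < deltaKernel k u := by
  obtain ⟨hu0, hu1⟩ := hu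
  have hk' : (1 : ℝ) ≤ k := by exact_mod_cast hk
  have hy : 0 < (k : ℝ) - 1 + u := by linarith
  set c := u * (1 - u) * exp ((k : ℝ) - 1 + u) * ((k - 1)! : ℝ)
  have hc : 0 < c := by
    have : 0 < 1 - u := by linarith
    positivity
  have hsucc : deltaKernel (k + 1) u = c * (exp 1 * k) / ((k : ℝ) + u) ^ (k + 2) := by
    have hfact : ((k + 1 - 1)! : ℝ) = k * (k - 1)! := by
      rw [Nat.add_sub_cancel, ← Nat.mul_factorial_pred (by omega : k ≠ 0)]; push_cast; rfl
    have hexp : exp ((k : ℝ) + u) = exp ((k : ℝ) - 1 + u) * exp 1 := by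
      rw [← exp_add]; ring_nf
    simp only [deltaKernel, c, Nat.cast_add_one, add_sub_cancel_right, hfact, hexp]
    ring
  have hkey := exp_one_mul_mul_sub_one_pow_lt (x := (k : ℝ) + u) (by linarith) (by linarith)
    (by linarith)
  rw [hsucc, deltaKernel, div_lt_div_iff₀ (by positivity) (by positivity)]
  calc c * (exp 1 * k) * ((k : ℝ) - 1 + u) ^ (k + 1)
      = c * (exp 1 * k * ((k : ℝ) + u - 1) ^ (k + 1)) := by ring
    _ < c * ((k : ℝ) + u) ^ (k + 2) := by gcongr
    _ = c * ((k : ℝ) + u) ^ (k + 1 + 1) := rfl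

lemma deltaKernel_succ_le {k : ℕ} (hk : 1 ≤ k) {u : ℝ} (hu : u ∈ Ioc 0 1) :
    deltaKernel (k + 1) u ≤ deltaKernel k u := by
  rcases hu.2.lt_or_eq with hu1 | rfl
  · exact (deltaKernel_succ_lt hk ⟨hu.1, hu1⟩).le
  · simp [deltaKernel]

theorem Delta_k_strict_anti (k : ℕ) (hk : 2 ≤ k) :
    (∫ u in (0 : ℝ)..1,
        u * (1 - u) * Real.exp (((k : ℝ) + 1) - 1 + u) * (Nat.factorial ((k + 1) - 1) : ℝ) /
          (((k : ℝ) + 1) - 1 + u) ^ ((k + 1) + 1))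
      < ∫ u in (0 : ℝ)..1,
          u * (1 - u) * Real.exp ((k : ℝ) - 1 + u) * (Nat.factorial (k - 1) : ℝ) /
            ((k : ℝ) - 1 + u) ^ (k + 1) := by
  have h := intervalIntegral.integral_lt_integral_of_continuousOn_of_le_of_exists_lt zero_lt_one
    (continuousOn_deltaKernel (k := k + 1) (by omega)) (continuousOn_deltaKernel hk)
    (fun u hu => deltaKernel_succ_le (by omega) hu)
    ⟨1 / 2, by norm_num, deltaKernel_succ_lt (by omega) (by norm_num)⟩
  simpa only [deltaKernel, Nat.cast_add_one] using h
end

section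
/- As k → ∞, Δ_{k+1} / (√(2π)·F(k)) → 1, where Δ_{k+1} = ∫_0^1 u(1-u)e^{k+u}k!/(k+u)^{k+2} du and F(k) = ∫_0^1 e^{(u-1/2)²/(4k)}·u(1-u)/(k+u)^{3/2} du. -/
open Real Filter Topology Set intervalIntegral Stirling
open MeasureTheory (volume)
open scoped Nat

/-!
Write `k! = s_k √(2k) (k/e)^k` with Stirling's sequence `s_k → √π`. Pointwise in `u ∈ [0, 1]`,
the integrand of `Δ_{k+1}` is then `(s_k / √π) e^{ψ_k(u)}` times that of `√(2π) F(k)`, where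
`ψ_k(u) = u - (k + 1/2) log(1 + u/k) - (u - 1/2)² / (4k)`. The elementary bounds
`u/(k+u) ≤ log(1 + u/k) ≤ u/k` give `|ψ_k| ≤ 1/k`, so the ratio of the integrals lies between
`(s_k / √π) e^{∓1/k}`, and both tend to `1`.
-/

lemma integral_div_integral_mem_Icc {f g : ℝ → ℝ} {s t a b : ℝ} (hst : s ≤ t)
    (hf : IntervalIntegrable f volume s t) (hg : IntervalIntegrable g volume s t)
    (hg_pos : 0 < ∫ x in s..t, g x) (hfg : ∀ x ∈ Icc s t, a * g x ≤ f x ∧ f x ≤ b * g x) :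
    (∫ x in s..t, f x) / (∫ x in s..t, g x) ∈ Icc a b := by
  rw [mem_Icc, le_div_iff₀ hg_pos, div_le_iff₀ hg_pos, ← integral_const_mul, ← integral_const_mul]
  exact ⟨integral_mono_on hst (hg.const_mul a) hf fun x hx ↦ (hfg x hx).1,
    integral_mono_on hst hf (hg.const_mul b) fun x hx ↦ (hfg x hx).2⟩

lemma tendsto_integral_div_integral_of_le_of_le {ι : Type*} {l : Filter ι} {f g : ι → ℝ → ℝ}
    {a b : ι → ℝ} {s t c : ℝ} (hst : s ≤ t) (ha : Tendsto a l (𝓝 c)) (hb : Tendsto b l (𝓝 c))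
    (hf : ∀ᶠ i in l, IntervalIntegrable (f i) volume s t)
    (hg : ∀ᶠ i in l, IntervalIntegrable (g i) volume s t)
    (hg_pos : ∀ᶠ i in l, 0 < ∫ x in s..t, g i x)
    (hfg : ∀ᶠ i in l, ∀ x ∈ Icc s t, a i * g i x ≤ f i x ∧ f i x ≤ b i * g i x) :
    Tendsto (fun i ↦ (∫ x in s..t, f i x) / ∫ x in s..t, g i x) l (𝓝 c) := by
  have h := (hf.and (hg.and (hg_pos.and hfg))).mono fun i ⟨hf, hg, hg_pos, hfg⟩ ↦
    integral_div_integral_mem_Icc hst hf hg hg_pos hfg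
  exact tendsto_of_tendsto_of_tendsto_of_le_of_le' ha hb (h.mono fun _ ↦ And.left)
    (h.mono fun _ ↦ And.right)

lemma div_add_le_log_div {K u : ℝ} (hK : 0 < K) (hu : 0 ≤ u) :
    u / (K + u) ≤ log ((K + u) / K) := by
  have h := one_sub_inv_le_log_of_pos (x := (K + u) / K) (by positivity)
  rwa [inv_div, one_sub_div (by positivity), add_sub_cancel_left] at h

lemma log_div_le_div {K u : ℝ} (hK : 0 < K) (hu : 0 ≤ u) :
    log ((K + u) / K) ≤ u / K := by
  have h := log_le_sub_one_of_pos (x := (K + u) / K) (by positivity)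
  rwa [div_sub_one hK.ne', add_sub_cancel_left] at h

lemma abs_sub_mul_log_div_sub_le {K u : ℝ} (hK : 0 < K) (hu₀ : 0 ≤ u) (hu₁ : u ≤ 1) :
    |u - (K + 1 / 2) * log ((K + u) / K) - (u - 1 / 2) ^ 2 / (4 * K)| ≤ K⁻¹ := by
  have hq₀ : 0 ≤ (u - 1 / 2) ^ 2 / (4 * K) := by positivity
  have hq₁ : (u - 1 / 2) ^ 2 / (4 * K) ≤ 1 / (4 * K) := by gcongr; nlinarith
  have hK' : 0 ≤ K + 1 / 2 := by positivity
  have hlow := mul_le_mul_of_nonneg_left (div_add_le_log_div hK hu₀) hK'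
  have hup := mul_le_mul_of_nonneg_left (log_div_le_div hK hu₀) hK'
  have e₁ : u - (K + 1 / 2) * (u / (K + u)) = u * (u - 1 / 2) / (K + u) := by
    field_simp; ring
  have e₂ : u - (K + 1 / 2) * (u / K) = - (u / (2 * K)) := by field_simp; ring
  have h₁ : u * (u - 1 / 2) / (K + u) ≤ 1 / (2 * K) := by
    have : u * (u - 1 / 2) ≤ 1 / 2 := by nlinarith
    rw [div_le_div_iff₀ (by positivity) (by positivity)]
    nlinarith [mul_le_mul_of_nonneg_left this hK.le]
  have h₂ : u / (2 * K) ≤ 1 / (2 * K) := by gcongr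
  have h₃ : 1 / (2 * K) + 1 / (4 * K) ≤ 1 / K := by
    rw [div_add_div _ _ (by positivity) (by positivity), div_le_div_iff₀ (by positivity) hK]
    nlinarith
  rw [abs_le, ← one_div]
  constructor <;> linarith

lemma exp_add_mul_factorial_div_pow {k : ℕ} (hk : k ≠ 0) {u : ℝ} (hu : 0 ≤ u) :
    exp (k + u) * k ! / (k + u) ^ (k + 2) =
      stirlingSeq k / √π * exp (u - (k + 1 / 2) * log ((k + u) / k)) *
        (√(2 * π) / (k + u) ^ (3 / 2 : ℝ)) := by
  have hk' : (0 : ℝ) < k := by positivity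
  have hx : (0 : ℝ) < k + u := by positivity
  have hs : 0 < stirlingSeq k := by unfold stirlingSeq; positivity
  refine log_injOn_pos.eq_iff (mem_Ioi.2 (by positivity)) (mem_Ioi.2 (by positivity)) |>.mp ?_
  unfold stirlingSeq
  simp (disch := positivity) only [log_mul, log_div, log_pow, log_rpow, log_exp, log_sqrt]
  push_cast
  ring

lemma stirlingSeq_mul_integrand_le_and_le {k : ℕ} (hk : k ≠ 0) {u : ℝ} (hu₀ : 0 ≤ u)
    (hu₁ : u ≤ 1) :
    let G := √(2 * π) * (exp ((u - 1 / 2) ^ 2 / (4 * k)) * (u * (1 - u)) / (k + u) ^ (3 / 2 : ℝ))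
    stirlingSeq k / √π * exp (-(k : ℝ)⁻¹) * G ≤
        u * (1 - u) * exp (k + u) * k ! / (k + u) ^ (k + 2) ∧
      u * (1 - u) * exp (k + u) * k ! / (k + u) ^ (k + 2) ≤
        stirlingSeq k / √π * exp (k : ℝ)⁻¹ * G := by
  intro G
  have hk' : (0 : ℝ) < k := by positivity
  set ψ := u - (k + 1 / 2) * log ((k + u) / k) - (u - 1 / 2) ^ 2 / (4 * k)
  have hG : 0 ≤ G := by
    have : 0 ≤ u * (1 - u) := mul_nonneg hu₀ (by linarith)
    positivity
  have hs : 0 ≤ stirlingSeq k / √π := by unfold stirlingSeq; positivity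
  have key : u * (1 - u) * exp (k + u) * k ! / (k + u) ^ (k + 2) =
      stirlingSeq k / √π * exp ψ * G := by
    rw [mul_assoc _ (exp _), mul_div_assoc, exp_add_mul_factorial_div_pow hk hu₀]
    simp only [ψ, G, exp_sub]
    field_simp
  have hψ := abs_le.mp (abs_sub_mul_log_div_sub_le hk' hu₀ hu₁)
  rw [key]
  constructor <;> gcongr
  exacts [hψ.1, hψ.2]

lemma intervalIntegrable_delta_integrand {k : ℕ} (hk : k ≠ 0) :
    IntervalIntegrable (fun u : ℝ ↦ u * (1 - u) * exp (k + u) * k ! / (k + u) ^ (k + 2))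
      volume 0 1 := by
  refine ContinuousOn.intervalIntegrable (ContinuousOn.div (by fun_prop) (by fun_prop) ?_)
  intro u hu
  rw [uIcc_of_le zero_le_one] at hu
  have : (0 : ℝ) < k + u := by have := hu.1; positivity
  positivity

lemma intervalIntegrable_F_integrand {k : ℕ} (hk : k ≠ 0) :
    IntervalIntegrable
      (fun u : ℝ ↦ exp ((u - 1 / 2) ^ 2 / (4 * k)) * (u * (1 - u)) / (k + u) ^ (3 / 2 : ℝ))
      volume 0 1 := by
  refine ContinuousOn.intervalIntegrable (ContinuousOn.div (by fun_prop) ?_ fun u hu ↦ ?_)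
  · exact ContinuousOn.rpow_const (by fun_prop) fun _ _ ↦ Or.inr (by norm_num)
  · rw [uIcc_of_le zero_le_one] at hu
    have : (0 : ℝ) < k + u := by have := hu.1; positivity
    positivity

lemma integral_F_integrand_pos {k : ℕ} (hk : k ≠ 0) :
    0 < ∫ u in (0 : ℝ)..1,
      exp ((u - 1 / 2) ^ 2 / (4 * k)) * (u * (1 - u)) / (k + u) ^ (3 / 2 : ℝ) := by
  refine intervalIntegral_pos_of_pos_on (intervalIntegrable_F_integrand hk) (fun u hu ↦ ?_)
    zero_lt_one
  have : 0 < u * (1 - u) := mul_pos hu.1 (sub_pos.2 hu.2)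
  have : (0 : ℝ) < k + u := by have := hu.1; positivity
  positivity

theorem Delta_k_asymptotic :
    Filter.Tendsto (fun k : ℕ =>
      (∫ u in (0 : ℝ)..1,
          u * (1 - u) * Real.exp ((k : ℝ) + u) * (Nat.factorial k : ℝ) /
            ((k : ℝ) + u) ^ (k + 2)) /
        (Real.sqrt (2 * Real.pi) *
          ∫ u in (0 : ℝ)..1,
            Real.exp ((u - 1 / 2) ^ 2 / (4 * k)) * (u * (1 - u)) /
              ((k : ℝ) + u) ^ ((3 : ℝ) / 2)))
      Filter.atTop (nhds 1) := by
  have hs : Tendsto (fun k : ℕ ↦ stirlingSeq k / √π) atTop (𝓝 1) := by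
    simpa [(sqrt_pos.2 pi_pos).ne'] using tendsto_stirlingSeq_sqrt_pi.div_const √π
  have hinv : Tendsto (fun k : ℕ ↦ (k : ℝ)⁻¹) atTop (𝓝 0) :=
    tendsto_inv_atTop_zero.comp tendsto_natCast_atTop_atTop
  have hexp {e : ℕ → ℝ} (he : Tendsto e atTop (𝓝 0)) :
      Tendsto (fun k ↦ stirlingSeq k / √π * exp (e k)) atTop (𝓝 1) := by
    simpa using hs.mul ((continuous_exp.tendsto 0).comp he)
  simp_rw [← integral_const_mul]
  refine tendsto_integral_div_integral_of_le_of_le zero_le_one (hexp (by simpa using hinv.neg))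
    (hexp hinv) ?_ ?_ ?_ ?_ <;> filter_upwards [eventually_ne_atTop 0] with k hk
  · exact intervalIntegrable_delta_integrand hk
  · exact (intervalIntegrable_F_integrand hk).const_mul _
  · rw [integral_const_mul]
    exact mul_pos (sqrt_pos.2 (by positivity)) (integral_F_integrand_pos hk)
  · exact fun u hu ↦ stirlingSeq_mul_integrand_le_and_le hk hu.1 hu.2
end
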